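/- Let K = ℚ(√D) with D ≥ 2 squarefree, i ≥ -1 odd, and a, b ∈ ℤ. Then Nm(aα_i + bα_{i+1}) = (a - b/γ_{i+2})(b√Δ + aN_i - bN_i/γ_{i+2}), where α_i are the convergents, N_i = |Nm(α_i)|, Δ the discriminant, and γ_{i+2} the continued fraction tail. -/

import Mathlib

noncomputable section

/-- `ω_D`: the standard generator of the ring of integers of `ℚ(√D)`. -/
def omegaD (D : ℕ) : ℝ := if D % 4 = 1 then (1 + Real.sqrt D) / 2 else Real.sqrt D

/-- The Galois conjugate of `ω_D`. -/
def omegaD' (D : ℕ) : ℝ := if D % 4 = 1 then (1 - Real.sqrt D) / 2 else -Real.sqrt D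

/-- Elements of `O_K` in coordinates: `(x, y)` represents `x + y·ω_D`. -/
abbrev OK : Type := ℤ × ℤ

/-- First real embedding. -/
def emb1 (D : ℕ) (a : OK) : ℝ := a.1 + a.2 * omegaD D

/-- Second real embedding (Galois conjugate). -/
def emb2 (D : ℕ) (a : OK) : ℝ := a.1 + a.2 * omegaD' D

/-- Galois conjugation on `O_K`. -/
def conjOK (D : ℕ) (a : OK) : OK := (a.1 + (if D % 4 = 1 then (1 : ℤ) else 0) * a.2, -a.2)

/-- Total positivity. -/
def TotPos (D : ℕ) (a : OK) : Prop := 0 < emb1 D a ∧ 0 < emb2 D a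

/-- The field norm. -/
def Nm (D : ℕ) (a : OK) : ℝ := emb1 D a * emb2 D a

/-- Indecomposability: totally positive and not a sum of two totally positive elements. -/
def Indec (D : ℕ) (a : OK) : Prop :=
  TotPos D a ∧ ¬ ∃ b c : OK, TotPos D b ∧ TotPos D c ∧ a = b + c

/-- Number of partitions of `α` into indecomposable parts (`p_K(α|I)`). -/
def pKI (D : ℕ) (α : OK) : ℕ :=
  Set.ncard {s : Multiset OK | (∀ x ∈ s, Indec D x) ∧ s.sum = α}

/-- Number of partitions of `α` into totally positive parts (`p_K(α)`). -/
def pK (D : ℕ) (α : OK) : ℕ :=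
  Set.ncard {s : Multiset OK | (∀ x ∈ s, TotPos D x) ∧ s.sum = α}

/-- Discriminant of `ℚ(√D)`. -/
def disc (D : ℕ) : ℕ := if D % 4 = 1 then D else 4 * D

/-- The ordered two-sided sequence of indecomposables together with
the coefficients `v j ≥ 2` from the Hejda–Kala relation `v_j β_j = β_{j-1} + β_{j+1}`. -/
structure BetaSeq (D : ℕ) (β : ℤ → OK) (v : ℤ → ℤ) : Prop where
  indec : ∀ j, Indec D (β j)
  surj : ∀ a : OK, Indec D a → ∃ j, β j = a
  mono : StrictMono fun j => emb1 D (β j)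
  zero : β 0 = (1, 0)
  conj_eq : ∀ j, β (-j) = conjOK D (β j)
  v_two_le : ∀ j, 2 ≤ v j
  v_symm : ∀ j, v (-j) = v j
  rel : ∀ j, v j • β j = β (j - 1) + β (j + 1)

/-- The continued fraction data of `ω_D = [⌈u₀/2⌉, \overline{u₁, …, u_s}]` (with `u_s = u_0`),
with tails `γ_0 = ω_D`, `γ_i = [u_i, u_{i+1}, …]` for `i ≥ 1`. -/
structure CFData (D : ℕ) (u : ℕ → ℕ) (γ : ℕ → ℝ) : Prop where
  gamma_zero : γ 0 = omegaD D
  u_zero : (u 0 : ℤ) = 2 * ⌊omegaD D⌋ - (if D % 4 = 1 then 1 else 0)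
  head : omegaD D = (⌊omegaD D⌋ : ℝ) + 1 / γ 1
  step : ∀ i, 1 ≤ i → γ i = u i + 1 / γ (i + 1)
  one_lt : ∀ i, 1 ≤ i → 1 < γ i
  floor_eq : ∀ i, 1 ≤ i → (u i : ℤ) = ⌊γ i⌋
  period : ∃ s, 1 ≤ s ∧ u s = u 0 ∧ ∀ i, 1 ≤ i → u (i + s) = u i

/-- The convergents `α_i = p_i + q_i ξ_D`, indexed by `i ≥ -1`. -/
structure ConvData (D : ℕ) (u : ℕ → ℕ) (a : ℤ → OK) : Prop where
  neg_one : a (-1) = (1, 0)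
  zero : a 0 = (⌊omegaD D⌋, 0) + (if D % 4 = 1 then ((-1 : ℤ), (1 : ℤ)) else (0, 1))
  recur : ∀ i : ℤ, -1 ≤ i → a (i + 2) = (u (i + 2).toNat : ℤ) • a (i + 1) + a i

/-- Semiconvergents `α_{i,r} = α_i + r·α_{i+1}`. -/
def semiconv (a : ℤ → OK) (i r : ℤ) : OK := a i + r • a (i + 1)

/-!
Write `x i`, `y i` for the two real embeddings of `α_i`. Both satisfy the recurrence of the
convergents, and since `γ_k = u_k + 1 / γ_{k+1}` the conjugates satisfy `y i = -γ_{i+2} y (i+1)`.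
The Wronskian `x (i+1) y i - x i y (i+1)` changes sign at every step and equals `√Δ` at `i = -1`.
For odd `i` both `x i` and `y i` are positive, so `N_i = x i y i`, and expanding
`Nm(Aα_i + Bα_{i+1}) = (A x i + B x (i+1)) (A y i + B y (i+1))` with these two relations gives
the formula.
-/

section Embeddings

variable {D : ℕ}

@[simp] lemma emb1_add (b c : OK) : emb1 D (b + c) = emb1 D b + emb1 D c := by
  simp only [emb1, Prod.fst_add, Prod.snd_add, Int.cast_add]; ring

@[simp] lemma emb2_add (b c : OK) : emb2 D (b + c) = emb2 D b + emb2 D c := by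
  simp only [emb2, Prod.fst_add, Prod.snd_add, Int.cast_add]; ring

@[simp] lemma emb1_zsmul (m : ℤ) (b : OK) : emb1 D (m • b) = m * emb1 D b := by
  simp only [emb1, Prod.smul_fst, Prod.smul_snd, smul_eq_mul, Int.cast_mul]; ring

@[simp] lemma emb2_zsmul (m : ℤ) (b : OK) : emb2 D (m • b) = m * emb2 D b := by
  simp only [emb2, Prod.smul_fst, Prod.smul_snd, smul_eq_mul, Int.cast_mul]; ring

lemma omegaD_add_omegaD' : omegaD D + omegaD' D = if D % 4 = 1 then 1 else 0 := by
  unfold omegaD omegaD'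
  split_ifs <;> ring

lemma sqrt_disc_eq_omegaD_sub_omegaD' : Real.sqrt (disc D) = omegaD D - omegaD' D := by
  unfold disc omegaD omegaD'
  split_ifs
  · ring
  · rw [Nat.cast_mul, Nat.cast_ofNat, Real.sqrt_mul zero_le_four,
      show (4 : ℝ) = 2 ^ 2 by norm_num, Real.sqrt_sq zero_le_two]
    ring

lemma emb1_sub_emb2 (b : OK) : emb1 D b - emb2 D b = b.2 * Real.sqrt (disc D) := by
  rw [sqrt_disc_eq_omegaD_sub_omegaD']; unfold emb1 emb2; ring

end Embeddings

def FollowsRecurrence (c f : ℤ → ℝ) : Prop :=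
  ∀ i, -1 ≤ i → f (i + 2) = c i * f (i + 1) + f i

lemma Int.odd_le_induction {P : ℤ → Prop} (base : P (-1))
    (step : ∀ i, -1 ≤ i → P i → P (i + 2)) {i : ℤ} (hi : -1 ≤ i) (hodd : Odd i) : P i := by
  obtain ⟨k, rfl⟩ := hodd
  induction k, (by omega : -1 ≤ k) using Int.leInduction with
  | base => simpa using base
  | succ k hk ih =>
    rw [show 2 * (k + 1) + 1 = 2 * k + 1 + 2 by ring]
    exact step _ (by omega) (ih (by omega))

namespace FollowsRecurrence

variable {c f g : ℤ → ℝ}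

lemma pos (hf : FollowsRecurrence c f) (hc : ∀ i, -1 ≤ i → 0 ≤ c i)
    (hneg : 0 < f (-1)) (hzero : 0 < f 0) {i : ℤ} (hi : -1 ≤ i) : 0 < f i := by
  suffices ∀ i, -1 ≤ i → 0 < f i ∧ 0 < f (i + 1) from (this i hi).1
  intro i hi
  induction i, hi using Int.leInduction with
  | base => exact ⟨hneg, hzero⟩
  | succ k hk ih =>
    refine ⟨ih.2, ?_⟩
    rw [add_assoc, one_add_one_eq_two, hf k hk]
    nlinarith [hc k hk]

/-- The Wronskian of two solutions changes sign at each step. -/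
lemma wronskian_of_odd {x : ℤ → ℝ} (hx : FollowsRecurrence c x) (hf : FollowsRecurrence c f)
    {i : ℤ} (hi : -1 ≤ i) (hodd : Odd i) :
    x (i + 1) * f i - x i * f (i + 1) = x 0 * f (-1) - x (-1) * f 0 := by
  refine Int.odd_le_induction (P := fun i => x (i + 1) * f i - x i * f (i + 1) = _)
    (by norm_num) (fun k hk ih => ?_) hi hodd
  have hk1 : -1 ≤ k + 1 := by omega
  rw [← ih, show k + 2 + 1 = k + 1 + 2 by ring, hx (k + 1) hk1, hf (k + 1) hk1,
    show k + 1 + 1 = k + 2 by ring, hx k hk, hf k hk]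
  ring

lemma eq_neg_mul_succ (hf : FollowsRecurrence c f) (hg : ∀ i, -1 ≤ i → g i = c i + 1 / g (i + 1))
    (hg₀ : ∀ i, -1 ≤ i → g i ≠ 0) (hneg : f (-1) = -g (-1) * f 0) {i : ℤ} (hi : -1 ≤ i) :
    f i = -g i * f (i + 1) := by
  induction i, hi using Int.leInduction with
  | base => simpa using hneg
  | succ k hk ih =>
    have hk1 : -1 ≤ k + 1 := by omega
    have hg1 := hg₀ (k + 1) hk1
    rw [add_assoc, one_add_one_eq_two, hf k hk, ih, hg k hk]
    field_simp
    ring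

end FollowsRecurrence

lemma pos_of_odd_of_eq_neg_mul_succ {f g : ℤ → ℝ} (hf : ∀ i, -1 ≤ i → f i = -g i * f (i + 1))
    (hg : ∀ i, -1 ≤ i → 0 < g i) (hneg : 0 < f (-1)) {i : ℤ} (hi : -1 ≤ i) (hodd : Odd i) :
    0 < f i := by
  refine Int.odd_le_induction (P := fun i => 0 < f i) hneg (fun k hk ih => ?_) hi hodd
  have hk1 : -1 ≤ k + 1 := by omega
  have hfk : f k = g k * g (k + 1) * f (k + 2) := by
    rw [hf k hk, hf (k + 1) hk1, add_assoc, one_add_one_eq_two]; ring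
  rw [hfk] at ih
  exact pos_of_mul_pos_right ih (mul_pos (hg k hk) (hg (k + 1) hk1)).le

section Convergents

variable {D : ℕ} {u : ℕ → ℕ} {γ : ℕ → ℝ} {a : ℤ → OK}

lemma CFData.gamma_pos (hCF : CFData D u γ) {k : ℕ} (hk : 1 ≤ k) : 0 < γ k :=
  one_pos.trans (hCF.one_lt k hk)

lemma ConvData.followsRecurrence_emb1 (hconv : ConvData D u a) :
    FollowsRecurrence (fun i => u (i + 2).toNat) (fun i => emb1 D (a i)) := fun i hi => by
  dsimp only
  rw [hconv.recur i hi, emb1_add, emb1_zsmul, Int.cast_natCast]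

lemma ConvData.followsRecurrence_emb2 (hconv : ConvData D u a) :
    FollowsRecurrence (fun i => u (i + 2).toNat) (fun i => emb2 D (a i)) := fun i hi => by
  dsimp only
  rw [hconv.recur i hi, emb2_add, emb2_zsmul, Int.cast_natCast]

lemma emb1_conv_zero (hCF : CFData D u γ) (hconv : ConvData D u a) :
    emb1 D (a 0) = u 0 + 1 / γ 1 := by
  have hu := congrArg (Int.cast : ℤ → ℝ) hCF.u_zero
  have hhead := hCF.head
  rw [hconv.zero]
  unfold emb1
  split_ifs at hu ⊢ <;>
  · simp only [Prod.fst_add, Prod.snd_add]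
    push_cast at hu ⊢
    linarith

lemma emb2_conv_zero (hCF : CFData D u γ) (hconv : ConvData D u a) :
    emb2 D (a 0) = -(1 / γ 1) := by
  have htr : omegaD D + omegaD' D = _ := omegaD_add_omegaD'
  have hhead := hCF.head
  rw [hconv.zero]
  unfold emb2
  split_ifs at htr ⊢ <;>
  · simp only [Prod.fst_add, Prod.snd_add]
    push_cast
    linarith

lemma emb2_conv_eq_neg_mul (hCF : CFData D u γ) (hconv : ConvData D u a) {i : ℤ} (hi : -1 ≤ i) :
    emb2 D (a i) = -γ (i + 2).toNat * emb2 D (a (i + 1)) := by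
  refine hconv.followsRecurrence_emb2.eq_neg_mul_succ (g := fun i => γ (i + 2).toNat)
    (fun k hk => ?_) (fun k hk => (hCF.gamma_pos (by omega)).ne') ?_ hi
  · rw [hCF.step _ (by omega), show (k + 1 + 2).toNat = (k + 2).toNat + 1 by omega]
  · have hγ := (hCF.gamma_pos le_rfl).ne'
    rw [emb2_conv_zero hCF hconv, hconv.neg_one]
    simp only [emb2]
    field_simp
    norm_num

lemma emb1_conv_pos (hCF : CFData D u γ) (hconv : ConvData D u a) {i : ℤ} (hi : -1 ≤ i) :
    0 < emb1 D (a i) := by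
  refine hconv.followsRecurrence_emb1.pos (fun k _ => Nat.cast_nonneg _) ?_ ?_ hi
  · simp [hconv.neg_one, emb1]
  · rw [emb1_conv_zero hCF hconv]
    have := hCF.gamma_pos le_rfl
    positivity

lemma emb2_conv_pos_of_odd (hCF : CFData D u γ) (hconv : ConvData D u a) {i : ℤ} (hi : -1 ≤ i)
    (hodd : Odd i) : 0 < emb2 D (a i) :=
  pos_of_odd_of_eq_neg_mul_succ (fun k hk => emb2_conv_eq_neg_mul hCF hconv hk)
    (fun k hk => hCF.gamma_pos (by omega)) (by simp [hconv.neg_one, emb2]) hi hodd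

lemma wronskian_conv_of_odd (hconv : ConvData D u a) {i : ℤ} (hi : -1 ≤ i) (hodd : Odd i) :
    emb1 D (a (i + 1)) * emb2 D (a i) - emb1 D (a i) * emb2 D (a (i + 1)) =
      Real.sqrt (disc D) := by
  have hq : (a 0).2 = 1 := by rw [hconv.zero]; split_ifs <;> simp
  rw [hconv.followsRecurrence_emb1.wronskian_of_odd hconv.followsRecurrence_emb2 hi hodd]
  simp only [hconv.neg_one, emb1, emb2, Int.cast_one, Int.cast_zero, zero_mul, add_zero, mul_one,
    one_mul]
  simpa [hq, emb1, emb2] using emb1_sub_emb2 (D := D) (a 0)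

end Convergents

theorem stmt8_general (D : ℕ)
    (u : ℕ → ℕ) (γ : ℕ → ℝ) (hCF : CFData D u γ)
    (a : ℤ → OK) (hconv : ConvData D u a)
    (i : ℤ) (hi : -1 ≤ i) (hodd : Odd i) (A B : ℤ) :
    Nm D (A • a i + B • a (i + 1)) =
      ((A : ℝ) - B / γ (i + 2).toNat) *
        (B * Real.sqrt (disc D) + A * |Nm D (a i)| - B * |Nm D (a i)| / γ (i + 2).toNat) := by
  have hγ : γ (i + 2).toNat ≠ 0 := (hCF.gamma_pos (by omega)).ne'
  have hN : |Nm D (a i)| = emb1 D (a i) * emb2 D (a i) :=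
    abs_of_pos (mul_pos (emb1_conv_pos hCF hconv hi) (emb2_conv_pos_of_odd hCF hconv hi hodd))
  rw [hN, ← wronskian_conv_of_odd hconv hi hodd, Nm, emb1_add, emb2_add, emb1_zsmul, emb1_zsmul,
    emb2_zsmul, emb2_zsmul, emb2_conv_eq_neg_mul hCF hconv hi]
  field_simp
  ring

/-- the norm formula `Nm(aα_i + bα_{i+1})
= (a - b/γ_{i+2})(b√Δ + aN_i - bN_i/γ_{i+2})`. -/
theorem stmt8 (D : ℕ) (hD : 2 ≤ D) (hsq : Squarefree D)
    (u : ℕ → ℕ) (γ : ℕ → ℝ) (hCF : CFData D u γ)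
    (a : ℤ → OK) (hconv : ConvData D u a)
    (i : ℤ) (hi : -1 ≤ i) (hodd : Odd i) (A B : ℤ) :
    Nm D (A • a i + B • a (i + 1)) =
      ((A : ℝ) - B / γ (i + 2).toNat) *
        (B * Real.sqrt (disc D) + A * |Nm D (a i)| - B * |Nm D (a i)| / γ (i + 2).toNat) :=
  stmt8_general D u γ hCF a hconv i hi hodd A B
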